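/- For all h > 0, f(h) ≥ f^{RAR}(h), i.e., the shallow water depth function is pointwise bounded below by its two-rarefaction approximation. Consequently the two-rarefaction root h_{*rr} is an upper bound for the exact root h_* of f. -/

import Mathlib

/-!
With `a = √(g h)` and `b = √(g h_K)`, the shock branch squared is
`(a² + b²)(a - b)²(a + b)² / (2 a² b²)`, and since `a² + b² ≥ 2ab` and `(a + b)² ≥ 4ab` this
is at least `4 (a - b)²`, the square of the rarefaction branch. Hence each wave curve lies above
its rarefaction extension, so `f ≥ f^RAR`; as `f^RAR` is strictly increasing, `f^RAR(h_*) ≤ 0 =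
f^RAR(h_{*rr})` gives `h_* ≤ h_{*rr}`.
-/

/-- Shallow water wave-curve branch function for a state with depth `hK`:
rarefaction branch for `h ≤ hK`, shock branch for `h > hK`. -/
noncomputable def sweBranch (g hK h : ℝ) : ℝ :=
  if h ≤ hK then 2 * (Real.sqrt (g * h) - Real.sqrt (g * hK))
  else Real.sqrt ((g / 2) * (h + hK) * (h - hK) ^ 2 / (h * hK))

lemma eight_mul_sq_mul_sq_sub_le {a b : ℝ} (ha : 0 ≤ a) (hb : 0 ≤ b) :
    8 * a ^ 2 * b ^ 2 * (a - b) ^ 2 ≤ (a ^ 2 + b ^ 2) * (a ^ 2 - b ^ 2) ^ 2 := by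
  have amgm_sq : 2 * a * b ≤ a ^ 2 + b ^ 2 := two_mul_le_add_sq a b
  have amgm : 4 * a * b ≤ (a + b) ^ 2 := by linarith [sq_nonneg (a - b)]
  calc 8 * a ^ 2 * b ^ 2 * (a - b) ^ 2 = (2 * a * b) * (4 * a * b) * (a - b) ^ 2 := by ring
    _ ≤ (a ^ 2 + b ^ 2) * (a + b) ^ 2 * (a - b) ^ 2 := by gcongr
    _ = (a ^ 2 + b ^ 2) * (a ^ 2 - b ^ 2) ^ 2 := by ring

lemma rarefaction_le_sweBranch {g hK : ℝ} (hg : 0 < g) (hhK : 0 < hK) (h : ℝ) :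
    2 * (√(g * h) - √(g * hK)) ≤ sweBranch g hK h := by
  unfold sweBranch
  split_ifs with hle
  · rfl
  push Not at hle
  have hh : 0 < h := hhK.trans hle
  set a := √(g * h)
  set b := √(g * hK)
  have ha_sq : a ^ 2 = g * h := Real.sq_sqrt (by positivity)
  have hb_sq : b ^ 2 = g * hK := Real.sq_sqrt (by positivity)
  have hb_pos : 0 < b := Real.sqrt_pos.mpr (by positivity)
  have hba : b < a := Real.sqrt_lt_sqrt (by positivity) (by gcongr)
  have ha_pos : 0 < a := hb_pos.trans hba
  have shock_eq : g / 2 * (h + hK) * (h - hK) ^ 2 / (h * hK) =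
      (a ^ 2 + b ^ 2) * (a ^ 2 - b ^ 2) ^ 2 / (2 * a ^ 2 * b ^ 2) := by
    rw [ha_sq, hb_sq]
    field_simp
  rw [shock_eq, Real.le_sqrt (by linarith) (by positivity), le_div_iff₀ (by positivity)]
  linarith [eight_mul_sq_mul_sq_sub_le ha_pos.le hb_pos.le]

/-- The shallow water depth function `f` is pointwise bounded below by its
two-rarefaction approximation `f^RAR`; consequently the two-rarefaction root
`h_{*rr}` is an upper bound for the exact root `h_*` of `f`. -/
theorem swe_depth_function_ge_two_rarefaction (g hL hR uL uR : ℝ)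
    (hg : 0 < g) (hhL : 0 < hL) (hhR : 0 < hR) :
    (∀ h : ℝ, 0 < h →
      sweBranch g hL h + sweBranch g hR h + (uR - uL) ≥
        2 * (Real.sqrt (g * h) - Real.sqrt (g * hL))
          + 2 * (Real.sqrt (g * h) - Real.sqrt (g * hR)) + (uR - uL)) ∧
    (∀ hstar hrr : ℝ, 0 < hstar → 0 < hrr →
      sweBranch g hL hstar + sweBranch g hR hstar + (uR - uL) = 0 →
      2 * (Real.sqrt (g * hrr) - Real.sqrt (g * hL))
        + 2 * (Real.sqrt (g * hrr) - Real.sqrt (g * hR)) + (uR - uL) = 0 →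
      hstar ≤ hrr) := by
  have depth_ge_rar : ∀ h : ℝ,
      sweBranch g hL h + sweBranch g hR h + (uR - uL) ≥
        2 * (√(g * h) - √(g * hL)) + 2 * (√(g * h) - √(g * hR)) + (uR - uL) := fun h => by
    linarith [rarefaction_le_sweBranch hg hhL h, rarefaction_le_sweBranch hg hhR h]
  refine ⟨fun h _ => depth_ge_rar h, fun hstar hrr _ hrr_pos hstar_root hrr_root => ?_⟩
  have sqrt_le : √(g * hstar) ≤ √(g * hrr) := by
    linarith [depth_ge_rar hstar]
  rw [Real.sqrt_le_sqrt_iff (by positivity)] at sqrt_le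
  exact le_of_mul_le_mul_left sqrt_le hg
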